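/- arXiv:1304.3687 — 2 statements merged into one kernel-verified Lean document; each statement's English description precedes it below -/
import Mathlib

section
/- Let R = ℂ[x,x⁻¹,y,y⁻¹], let B ⊆ R be the ℂ-subspace spanned by the monomials xⁱyʲ with i ≥ 0 and j ∈ ℤ (the subring ℂ[x,y,y⁻¹]), and let n be an even natural number. Consider the ℂ-module V = x⁻ⁿB/B and the ℂ-bilinear pairing β : V × V → R/B induced by (f,g) ↦ xⁿy⁻¹fg (this is well defined since xⁿy⁻¹·f·B ⊆ B for f ∈ x⁻ⁿB). Then the submodule N = x^{−n/2}B/B of V satisfies β(u,v) = 0 for all u,v ∈ N, and moreover N = {v ∈ V : β(v,u) = 0 for all u ∈ N}; that is, N is a Lagrangian of the pairing. (This shows the restricted form representing L⁰(⟨y⟩) on the chart U_{σ₃} of H_n has trivial Witt class when n is even.) -/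
noncomputable section

/-- The Laurent polynomial ring `ℂ[x,x⁻¹,y,y⁻¹]` as the monoid algebra of `ℤ × ℤ` over `ℂ`. -/
abbrev LaurentR : Type := AddMonoidAlgebra ℂ (ℤ × ℤ)

/-- The monomial `xⁱyʲ`. -/
def mono (i j : ℤ) : LaurentR := AddMonoidAlgebra.single (i, j) 1

/-- `x` -/
def xx : LaurentR := mono 1 0
/-- `x⁻¹` -/
def xxInv : LaurentR := mono (-1) 0
/-- `y` -/
def yy : LaurentR := mono 0 1
/-- `y⁻¹` -/
def yyInv : LaurentR := mono 0 (-1)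

/-- `A = ℂ[x,y]`, the ℂ-subspace spanned by monomials `xⁱyʲ` with `i ≥ 0`, `j ≥ 0`. -/
def Asub : Submodule ℂ LaurentR := Submodule.span ℂ {r | ∃ (i : ℕ) (j : ℕ), r = mono i j}
/-- `B = ℂ[x,y,y⁻¹]`, the ℂ-subspace spanned by monomials `xⁱyʲ` with `i ≥ 0`, `j ∈ ℤ`. -/
def Bsub : Submodule ℂ LaurentR := Submodule.span ℂ {r | ∃ (i : ℕ) (j : ℤ), r = mono i j}
/-- `C = ℂ[x,x⁻¹,y]`, the ℂ-subspace spanned by monomials `xⁱyʲ` with `i ∈ ℤ`, `j ≥ 0`. -/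
def Csub : Submodule ℂ LaurentR := Submodule.span ℂ {r | ∃ (i : ℤ) (j : ℕ), r = mono i j}
/-- `ℂ[y,y⁻¹]`, the ℂ-subspace spanned by the monomials `yʲ`, `j ∈ ℤ`. -/
def Dy : Submodule ℂ LaurentR := Submodule.span ℂ {r | ∃ (j : ℤ), r = mono 0 j}
/-- `ℂ[x,x⁻¹]`, the ℂ-subspace spanned by the monomials `xⁱ`, `i ∈ ℤ`. -/
def Dx : Submodule ℂ LaurentR := Submodule.span ℂ {r | ∃ (i : ℤ), r = mono i 0}

/-- `u·L = {u·f : f ∈ L}` as a `ℂ`-submodule of `LaurentR`. -/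
def dil (u : LaurentR) (L : Submodule ℂ LaurentR) : Submodule ℂ LaurentR :=
  L.map (LinearMap.mulLeft ℂ u)

lemma mono_mul (i j i' j' : ℤ) : mono i j * mono i' j' = mono (i + i') (j + j') := by
  simp [mono, AddMonoidAlgebra.single_mul_single, Prod.mk_add_mk]

lemma mono_zero_zero : mono 0 0 = 1 := rfl

lemma xx_pow (m : ℕ) : xx ^ m = mono m 0 := by
  induction m with
  | zero => simp [mono_zero_zero]
  | succ k ih => rw [pow_succ, ih, xx, mono_mul]; push_cast; ring_nf

lemma xxInv_pow (m : ℕ) : xxInv ^ m = mono (-m) 0 := by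
  induction m with
  | zero => simp [mono_zero_zero]
  | succ k ih => rw [pow_succ, ih, xxInv, mono_mul]; push_cast; ring_nf

lemma mono_mem_B (i : ℕ) (j : ℤ) : mono i j ∈ Bsub :=
  Submodule.subset_span ⟨i, j, rfl⟩

lemma B_mul_B : Bsub * Bsub ≤ Bsub := by
  rw [Bsub, Submodule.span_mul_span]
  apply Submodule.span_le.mpr
  rintro r ⟨a, ⟨i, j, rfl⟩, b, ⟨i', j', rfl⟩, rfl⟩
  dsimp only
  rw [mono_mul]
  exact Submodule.subset_span ⟨i + i', j + j', by push_cast; ring_nf⟩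

lemma mul_mem_B {f g : LaurentR} (hf : f ∈ Bsub) (hg : g ∈ Bsub) : f * g ∈ Bsub :=
  B_mul_B (Submodule.mul_mem_mul hf hg)

lemma mem_dil_mono (a b : ℤ) (v : LaurentR) :
    v ∈ dil (mono a b) Bsub ↔ mono (-a) (-b) * v ∈ Bsub := by
  constructor
  · rintro ⟨f, hf, rfl⟩
    simpa [LinearMap.mulLeft_apply, ← mul_assoc, mono_mul, mono_zero_zero] using hf
  · intro h
    exact ⟨mono (-a) (-b) * v, h, by
      simp [LinearMap.mulLeft_apply, ← mul_assoc, mono_mul, mono_zero_zero]⟩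

/-- For `n` even, the submodule `N = x^{-n/2}B/B` of `V = x⁻ⁿB/B` is a
Lagrangian for the pairing `β` induced by `(f,g) ↦ xⁿy⁻¹fg` with values in `R/B`:
`β` vanishes on `N × N`, and `N` equals its own orthogonal complement in `V`.
(Stated at the level of lattices in `R`; membership in `B` expresses vanishing in `R/B`.) -/
theorem stmt_3 (n : ℕ) (hn : Even n) :
    (∀ u ∈ dil (xxInv ^ (n / 2)) Bsub, ∀ v ∈ dil (xxInv ^ (n / 2)) Bsub,
        xx ^ n * yyInv * (u * v) ∈ Bsub) ∧
    {v : LaurentR | v ∈ dil (xxInv ^ n) Bsub ∧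
        ∀ u ∈ dil (xxInv ^ (n / 2)) Bsub, xx ^ n * yyInv * (v * u) ∈ Bsub}
      = (dil (xxInv ^ (n / 2)) Bsub : Set LaurentR) := by

  obtain ⟨m, hm⟩ := hn
  have hk : n / 2 = m := by omega
  set k : ℤ := (m : ℤ) with hkdef
  have hnk : (n : ℤ) = k + k := by rw [hkdef]; exact_mod_cast hm
  rw [hk, xxInv_pow, xx_pow]
  have key : ∀ f g : LaurentR, f ∈ Bsub → g ∈ Bsub →
      mono n 0 * yyInv * ((mono (-k) 0 * f) * (mono (-k) 0 * g)) ∈ Bsub := by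
    intro f g hf hg
    have e : mono (n:ℤ) 0 * yyInv * ((mono (-k) 0 * f) * (mono (-k) 0 * g))
        = mono ((n:ℤ) + -k + -k) (-1) * (f * g) := by
      rw [yyInv, show mono ((n:ℤ) + -k + -k) (-1)
        = mono (n:ℤ) 0 * mono 0 (-1) * mono (-k) 0 * mono (-k) 0 by
          rw [mono_mul, mono_mul, mono_mul]; norm_num]
      ring
    rw [e, show (n:ℤ) + -k + -k = 0 by omega]
    exact mul_mem_B (mono_mem_B 0 (-1)) (mul_mem_B hf hg)
  constructor
  · rintro u ⟨f, hf, rfl⟩ v ⟨g, hg, rfl⟩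
    exact key f g hf hg
  · ext v
    simp only [Set.mem_setOf_eq, SetLike.mem_coe]
    constructor
    · rintro ⟨-, hpair⟩
      have h1 : mono (-k) 0 ∈ dil (mono (-k) 0) Bsub := by
        rw [mem_dil_mono]
        simpa [mono_mul, mono_zero_zero] using mono_mem_B 0 0
      have h2 := hpair _ h1
      rw [mem_dil_mono]
      have e : mono (n:ℤ) 0 * yyInv * (v * mono (-k) 0) = mono k (-1) * v := by
        rw [yyInv, show mono k (-1) = mono (n:ℤ) 0 * mono 0 (-1) * mono (-k) 0 by
          rw [mono_mul, mono_mul]; congr 1 <;> omega]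
        ring
      rw [e] at h2
      have e3 : mono (- -k) (-0) * v = mono 0 1 * (mono k (-1) * v) := by
        rw [← mul_assoc, mono_mul]; norm_num
      rw [e3]
      exact mul_mem_B (mono_mem_B 0 1) h2
    · rintro ⟨f, hf, rfl⟩
      refine ⟨?_, ?_⟩
      · rw [xxInv_pow, mem_dil_mono]
        simp only [LinearMap.mulLeft_apply, neg_neg, neg_zero]
        rw [← mul_assoc, mono_mul, show (n:ℤ) + -k = k by omega]
        exact mul_mem_B (by simpa [hkdef] using mono_mem_B m 0) hf
      · rintro u ⟨g, hg, rfl⟩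
        exact key f g hf hg
end
end

section
/- Let R = ℂ[x,x⁻¹,y,y⁻¹]. Let A, B, C ⊆ R be the ℂ-subspaces spanned by the monomials xⁱyʲ with, respectively: i ≥ 0 and j ≥ 0 (A); i ≥ 0 and j ∈ ℤ (B); i ∈ ℤ and j ≥ 0 (C). Then {f ∈ x⁻¹B : f·A ⊆ B + C} = x⁻¹A + B. (This is the self-duality of the lattice (x⁻¹A + B)/B for ⟨1_y⟩ on the chart U_{σ₁}, which makes the corresponding entry of d¹ vanish.) -/
noncomputable section

/-!
Every subspace in sight is spanned by monomials, so it is `AddMonoidAlgebra.supported` on a set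
of exponents, and `x⁻¹` translates that set by `(-1, 0)`. Testing `f·A ⊆ B + C` against `g = 1`
confines the exponents of `f` to `{i ≥ -1} ∩ ({i ≥ 0} ∪ {j ≥ 0}) = {i ≥ 0} ∪ {i = -1, j ≥ 0}`,
the exponent set of `x⁻¹A + B`; conversely, the exponents of `f·g` lie in the sumset of those
of `f` and `g`, and adding the quadrant `ℕ²` to this set keeps it inside `{i ≥ 0} ∪ {j ≥ 0}`.
-/

open scoped Pointwise

namespace AddMonoidAlgebra

variable {k G : Type*}

lemma supported_sup_supported [Semiring k] (s t : Set G) :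
    supported k k s ⊔ supported k k t = supported k k (s ∪ t) := by
  simp only [supported_eq_span_single, Set.image_union, Submodule.span_union]

lemma supported_inf_supported [Semiring k] (s t : Set G) :
    supported k k s ⊓ supported k k t = supported k k (s ∩ t) := by
  ext x
  simp only [Submodule.mem_inf, mem_supported, Set.subset_inter_iff]

lemma one_mem_supported [Semiring k] [AddZeroClass G] {s : Set G} (hs : 0 ∈ s) :
    (1 : AddMonoidAlgebra k G) ∈ supported k k s :=
  mem_supported.2 <| (Finset.coe_subset.2 support_coeff_one_subset).trans (by simpa using hs)

lemma mul_mem_supported_add [Semiring k] [Add G] {s t : Set G} {x y : AddMonoidAlgebra k G}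
    (hx : x ∈ supported k k s) (hy : y ∈ supported k k t) : x * y ∈ supported k k (s + t) := by
  classical
  refine mem_supported.2 <| (Finset.coe_subset.2 (support_coeff_mul_subset x y)).trans ?_
  rw [Finset.coe_add]
  exact Set.add_subset_add (mem_supported.1 hx) (mem_supported.1 hy)

lemma map_mulLeft_single_supported [CommSemiring k] [AddMonoid G] (g : G) (s : Set G) :
    (supported k k s).map (LinearMap.mulLeft k (single g (1 : k))) =
      supported k k ((g + ·) '' s) := by
  simp only [supported_eq_span_single, Submodule.map_span, Set.image_image,
    LinearMap.mulLeft_apply, single_mul_single, mul_one]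

end AddMonoidAlgebra

open AddMonoidAlgebra

lemma Asub_eq_supported : Asub = supported ℂ ℂ {p : ℤ × ℤ | 0 ≤ p.1 ∧ 0 ≤ p.2} := by
  rw [Asub, supported_eq_span_single]
  congr 1
  ext r
  constructor
  · rintro ⟨i, j, rfl⟩
    exact ⟨(i, j), by simp, rfl⟩
  · rintro ⟨⟨i, j⟩, ⟨hi, hj⟩, rfl⟩
    lift i to ℕ using hi
    lift j to ℕ using hj
    exact ⟨i, j, rfl⟩

lemma Bsub_eq_supported : Bsub = supported ℂ ℂ {p : ℤ × ℤ | 0 ≤ p.1} := by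
  rw [Bsub, supported_eq_span_single]
  congr 1
  ext r
  constructor
  · rintro ⟨i, j, rfl⟩
    exact ⟨(i, j), by simp, rfl⟩
  · rintro ⟨⟨i, j⟩, hi, rfl⟩
    lift i to ℕ using hi
    exact ⟨i, j, rfl⟩

lemma Csub_eq_supported : Csub = supported ℂ ℂ {p : ℤ × ℤ | 0 ≤ p.2} := by
  rw [Csub, supported_eq_span_single]
  congr 1
  ext r
  constructor
  · rintro ⟨i, j, rfl⟩
    exact ⟨(i, j), by simp, rfl⟩
  · rintro ⟨⟨i, j⟩, hj, rfl⟩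
    lift j to ℕ using hj
    exact ⟨i, j, rfl⟩

lemma dil_xxInv_supported (s : Set (ℤ × ℤ)) :
    dil xxInv (supported ℂ ℂ s) = supported ℂ ℂ ((fun p ↦ (1, 0) + p) ⁻¹' s) := by
  rw [dil, xxInv, mono, map_mulLeft_single_supported, Set.image_add_left]
  simp only [Int.reduceNeg, Prod.neg_mk, neg_neg, neg_zero]

/-- `{f ∈ x⁻¹B : f·A ⊆ B + C} = x⁻¹A + B`: self-duality of the lattice
`(x⁻¹A + B)/B` for `⟨1_y⟩` on the chart `U_{σ₁}`. -/
theorem stmt_11 :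
    {f : LaurentR | f ∈ dil xxInv Bsub ∧ ∀ g ∈ Asub, f * g ∈ Bsub ⊔ Csub}
      = ((dil xxInv Asub ⊔ Bsub : Submodule ℂ LaurentR) : Set LaurentR) := by
  ext f
  simp only [Asub_eq_supported, Bsub_eq_supported, Csub_eq_supported, dil_xxInv_supported,
    supported_sup_supported, Set.mem_ofPred_eq, SetLike.mem_coe]
  constructor
  · rintro ⟨hf, hfA⟩
    have hfBC := mul_one f ▸ hfA 1 (one_mem_supported (by simp))
    refine supported_mono ?_ (by rw [← supported_inf_supported]; exact ⟨hf, hfBC⟩)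
    rintro ⟨i, j⟩
    simp only [Set.preimage_ofPred_eq, Prod.fst_add, Set.mem_inter_iff, Set.mem_ofPred_eq,
      Set.mem_union, Prod.snd_add, zero_add, and_imp]
    omega
  · intro hf
    refine ⟨supported_mono ?_ hf, fun g hg ↦ supported_mono ?_ (mul_mem_supported_add hf hg)⟩
    · rintro ⟨i, j⟩
      simp only [Set.preimage_ofPred_eq, Prod.fst_add, Prod.snd_add, zero_add, Set.mem_union,
        Set.mem_ofPred_eq]
      omega
    · rintro _ ⟨⟨i, j⟩, hp, ⟨k, l⟩, hq, rfl⟩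
      simp only [Set.preimage_ofPred_eq, Prod.fst_add, Prod.snd_add, zero_add, Set.mem_union,
        Set.mem_ofPred_eq, Prod.mk_add_mk] at *
      omega
end
end
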